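/- With the above setup, for all t ≥ 0: (I_p ⊗ 1₂ᵀ) D♯_{Q̃} D♯_{Q̃}(t) (I_p ⊗ 1₂) = (I_p ⊗ 1₂ᵀ) D♯_{Q̄} D♯_{Q̄}(t) (I_p ⊗ 1₂) = 2 D♯_G D♯_G(t). -/

import Mathlib

open Matrix MeasureTheory

/-- `Q` is a generator matrix of a finite CTMC: nonnegative off-diagonal entries
and zero row sums. -/
def IsGenerator {n : Type*} [Fintype n] (Q : Matrix n n ℝ) : Prop :=
  (∀ i j, i ≠ j → 0 ≤ Q i j) ∧ ∀ i, ∑ j, Q i j = 0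

/-- Irreducibility of the CTMC with generator `Q`: the transition matrix `e^Q`
is entrywise positive. -/
def IsIrreducibleGen {n : Type*} [Fintype n] [DecidableEq n] (Q : Matrix n n ℝ) : Prop :=
  ∀ i j, 0 < NormedSpace.exp Q i j

/-- `π` is a stationary distribution of the generator `Q`: `πQ = 0`, `π1 = 1`. -/
def IsStationaryDist {n : Type*} [Fintype n] (Q : Matrix n n ℝ) (π : n → ℝ) : Prop :=
  (∀ i, 0 ≤ π i) ∧ (∑ i, π i = 1) ∧ π ᵥ* Q = 0

/-- The rank-one matrix `1π`. -/
def onePi {n : Type*} (π : n → ℝ) : Matrix n n ℝ :=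
  Matrix.of fun _ j => π j

/-- `Ds` is the deviation matrix `D♯ = ∫₀^∞ (e^{Qu} − 1π) du` of `Q`
(entrywise convergent integral). -/
def IsDeviation {n : Type*} [Fintype n] [DecidableEq n] (Q : Matrix n n ℝ) (π : n → ℝ)
    (Ds : Matrix n n ℝ) : Prop :=
  ∀ i j, IntegrableOn (fun u => NormedSpace.exp (u • Q) i j - π j) (Set.Ioi (0:ℝ)) MeasureTheory.volume ∧
    Ds i j = ∫ u in Set.Ioi (0:ℝ), (NormedSpace.exp (u • Q) i j - π j)

/-- `Dt` is the transient deviation matrix `D♯(t) = ∫₀^t (e^{Qu} − 1π) du` of `Q`. -/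
def IsTransientDeviation {n : Type*} [Fintype n] [DecidableEq n] (Q : Matrix n n ℝ) (π : n → ℝ)
    (Dt : ℝ → Matrix n n ℝ) : Prop :=
  ∀ t i j, Dt t i j = ∫ u in Set.Ioc (0:ℝ) t, (NormedSpace.exp (u • Q) i j - π j)

/-- The `p × 2p` matrix `I_p ⊗ 1₂ᵀ`, where the `2p` index set is `Fin p × Fin 2`. -/
def kronA (p : ℕ) : Matrix (Fin p) (Fin p × Fin 2) ℝ :=
  Matrix.of fun i jk => if jk.1 = i then 1 else 0

/-- The slowness condition `λ_i > S_i = ∑_{j≠i} q_{ij} = -G i i` for a generator `G`. -/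
def IsSlow {p : ℕ} (G : Matrix (Fin p) (Fin p) ℝ) (lam : Fin p → ℝ) : Prop :=
  ∀ i, -G i i < lam i

/-- The `2p × 2p` generator `Q̄` of the MTCP associated with a slow MMPP with
modulating generator `G` and rates `λ`: diagonal `2×2` blocks
`[[−λ_i, λ_i − S_i],[λ_i − S_i, −λ_i]]` (note `λ_i − S_i = λ_i + G i i`) and
off-diagonal blocks `q_{ij} I₂`. -/
def Qbar {p : ℕ} (G : Matrix (Fin p) (Fin p) ℝ) (lam : Fin p → ℝ) :
    Matrix (Fin p × Fin 2) (Fin p × Fin 2) ℝ :=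
  Matrix.of fun ik jl =>
    if ik.1 = jl.1 then (if ik.2 = jl.2 then -lam ik.1 else lam ik.1 + G ik.1 ik.1)
    else (if ik.2 = jl.2 then G ik.1 jl.1 else 0)

/-- The `2p × 2p` generator `Q̃` of the coupled MAP built from the MMPP: diagonal
blocks `[[−(λ_i + S_i), λ_i],[λ_i, −(λ_i + S_i)]]` (note `−(λ_i+S_i) = G i i − λ_i`)
and off-diagonal blocks `q_{ij} I₂`. -/
def Qtil {p : ℕ} (G : Matrix (Fin p) (Fin p) ℝ) (lam : Fin p → ℝ) :
    Matrix (Fin p × Fin 2) (Fin p × Fin 2) ℝ :=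
  Matrix.of fun ik jl =>
    if ik.1 = jl.1 then (if ik.2 = jl.2 then G ik.1 ik.1 - lam ik.1 else lam ik.1)
    else (if ik.2 = jl.2 then G ik.1 jl.1 else 0)

/-- The event-intensity matrix `D̄ = Q̄ − diag(Q̄)` of the associated MTCP. -/
def Dbar {p : ℕ} (G : Matrix (Fin p) (Fin p) ℝ) (lam : Fin p → ℝ) :
    Matrix (Fin p × Fin 2) (Fin p × Fin 2) ℝ :=
  Qbar G lam - Matrix.diagonal fun ik => Qbar G lam ik ik

/-- The event-intensity matrix `D̃` of the coupled MMPP: block diagonal with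
blocks `[[0, λ_i],[λ_i, 0]]`. -/
def Dtil {p : ℕ} (lam : Fin p → ℝ) : Matrix (Fin p × Fin 2) (Fin p × Fin 2) ℝ :=
  Matrix.of fun ik jl => if ik.1 = jl.1 ∧ ik.2 ≠ jl.2 then lam ik.1 else 0

/-- The common stationary distribution `π = (1/2) ϑ (I_p ⊗ 1₂ᵀ)` of `Q̄` and `Q̃`. -/
noncomputable def piHat {p : ℕ} (θ : Fin p → ℝ) : Fin p × Fin 2 → ℝ :=
  (1/2 : ℝ) • (θ ᵥ* kronA p)

/-! `A = I_p ⊗ 1₂ᵀ` intertwines both `Q̄` and `Q̃` with `G` (summing the two phases of a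
level recovers the modulating chain), and `1π` with `1ϑ`. Intertwining passes to the
exponentials `e^{Qu}`, hence to the integrands `e^{Qu} − 1π` and to the (transient)
deviation matrices: `A D♯_Q = D♯_G A`, `A D♯_Q(t) = D♯_G(t) A`. Then
`A D♯_Q D♯_Q(t) Aᵀ = D♯_G D♯_G(t) A Aᵀ = 2 D♯_G D♯_G(t)` since `A Aᵀ = 2 I_p`. -/

theorem Matrix.mul_exp_eq_exp_mul_of_mul_eq {m n : Type*} [Fintype m] [Fintype n]
    [DecidableEq m] [DecidableEq n] {A : Matrix m n ℝ} {G : Matrix m m ℝ} {Q : Matrix n n ℝ}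
    (h : A * Q = G * A) : A * NormedSpace.exp Q = NormedSpace.exp G * A := by
  have hpow (k : ℕ) : A * Q ^ k = G ^ k * A := by
    induction k with
    | zero => simp
    | succ k ih =>
      rw [pow_succ, pow_succ, ← Matrix.mul_assoc, ih, Matrix.mul_assoc, h, Matrix.mul_assoc]
  open scoped Norms.Operator in
  have hleft := (NormedSpace.exp_series_hasSum_exp' (𝕂 := ℝ) Q).map
    (AddMonoidHom.mk' (A * ·) (Matrix.mul_add A)) (continuous_const.matrix_mul continuous_id)
  open scoped Norms.Operator in
  have hright := (NormedSpace.exp_series_hasSum_exp' (𝕂 := ℝ) G).map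
    (AddMonoidHom.mk' (· * A) (Matrix.add_mul · · A)) (continuous_id.matrix_mul continuous_const)
  refine hleft.unique (hright.congr_fun fun k => ?_)
  simp [Matrix.mul_smul, Matrix.smul_mul, hpow]

theorem Matrix.continuous_exp_smul {n : Type*} [Fintype n] [DecidableEq n] (Q : Matrix n n ℝ) :
    Continuous fun u : ℝ => NormedSpace.exp (u • Q) := by
  open scoped Norms.Operator in
  exact NormedSpace.exp_continuous.comp (continuous_id.smul continuous_const)

theorem Matrix.mul_integral_eq_integral_mul {α m n : Type*} [MeasurableSpace α] [Fintype m]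
    [Fintype n] (μ : Measure α) {A : Matrix m n ℝ} {F : α → Matrix n n ℝ}
    {H : α → Matrix m m ℝ} (hF : ∀ i j, Integrable (fun u => F u i j) μ)
    (hH : ∀ i j, Integrable (fun u => H u i j) μ) (hAFH : ∀ u, A * F u = H u * A) :
    A * of (fun i j => ∫ u, F u i j ∂μ) = of (fun i j => ∫ u, H u i j ∂μ) * A := by
  ext i j
  simp only [mul_apply, of_apply, ← integral_const_mul, ← integral_mul_const]
  rw [← integral_finsetSum _ fun k _ => (hF k j).const_mul _,
    ← integral_finsetSum _ fun k _ => (hH i k).mul_const _]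
  congr 1 with u
  simpa only [mul_apply] using congrFun (congrFun (hAFH u) i) j

theorem integrableOn_Ioc_exp_smul_sub_onePi {n : Type*} [Fintype n] [DecidableEq n]
    (Q : Matrix n n ℝ) (π : n → ℝ) (t : ℝ) (i j : n) :
    IntegrableOn (fun u => (NormedSpace.exp (u • Q) - onePi π) i j) (Set.Ioc 0 t) :=
  (((continuous_exp_smul Q).sub continuous_const).matrix_elem i j).integrableOn_Ioc

section Deviation

variable {m n : Type*} [Fintype m] [Fintype n] [DecidableEq m] [DecidableEq n]
  {A : Matrix m n ℝ} {G : Matrix m m ℝ} {Q : Matrix n n ℝ} {θ : m → ℝ} {π : n → ℝ}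

theorem mul_exp_smul_sub_onePi (hQ : A * Q = G * A) (hπ : A * onePi π = onePi θ * A) (u : ℝ) :
    A * (NormedSpace.exp (u • Q) - onePi π) = (NormedSpace.exp (u • G) - onePi θ) * A := by
  have hu : A * (u • Q) = (u • G) * A := by rw [Matrix.mul_smul, hQ, Matrix.smul_mul]
  rw [Matrix.mul_sub, Matrix.sub_mul, mul_exp_eq_exp_mul_of_mul_eq hu, hπ]

theorem IsDeviation.mul_eq (hQ : A * Q = G * A) (hπ : A * onePi π = onePi θ * A)
    {DsQ : Matrix n n ℝ} {DsG : Matrix m m ℝ} (hDsQ : IsDeviation Q π DsQ)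
    (hDsG : IsDeviation G θ DsG) : A * DsQ = DsG * A := by
  have key := mul_integral_eq_integral_mul (volume.restrict (Set.Ioi 0))
    (fun i j => by simp only [onePi, Matrix.sub_apply, of_apply]; exact (hDsQ i j).1)
    (fun i j => by simp only [onePi, Matrix.sub_apply, of_apply]; exact (hDsG i j).1)
    (mul_exp_smul_sub_onePi hQ hπ)
  convert key using 2 <;> ext i j <;> simp [onePi, (hDsQ _ _).2, (hDsG _ _).2]

theorem IsTransientDeviation.mul_eq (hQ : A * Q = G * A) (hπ : A * onePi π = onePi θ * A)
    {DtQ : ℝ → Matrix n n ℝ} {DtG : ℝ → Matrix m m ℝ}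
    (hDtQ : IsTransientDeviation Q π DtQ) (hDtG : IsTransientDeviation G θ DtG) (t : ℝ) :
    A * DtQ t = DtG t * A := by
  have key := mul_integral_eq_integral_mul (volume.restrict (Set.Ioc 0 t))
    (integrableOn_Ioc_exp_smul_sub_onePi Q π t) (integrableOn_Ioc_exp_smul_sub_onePi G θ t)
    (mul_exp_smul_sub_onePi hQ hπ)
  convert key using 2 <;> ext i j <;> simp [onePi, hDtQ t, hDtG t]

end Deviation

theorem Matrix.mul_mul_mul_transpose_of_mul_eq {m n : Type*} [Fintype m] [Fintype n]
    [DecidableEq m] {A : Matrix m n ℝ} {D E : Matrix n n ℝ} {D' E' : Matrix m m ℝ} {c : ℝ}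
    (hD : A * D = D' * A) (hE : A * E = E' * A) (hA : A * Aᵀ = c • 1) :
    A * (D * E) * Aᵀ = c • (D' * E') := by
  rw [← Matrix.mul_assoc A D E, hD, Matrix.mul_assoc D' A E, hE, ← Matrix.mul_assoc D' E' A,
    Matrix.mul_assoc _ A, hA, Matrix.mul_smul, Matrix.mul_one]

section kronA

variable {p : ℕ}

theorem kronA_mul_apply {n : Type*} (M : Matrix (Fin p × Fin 2) n ℝ) (i : Fin p) (j : n) :
    (kronA p * M) i j = ∑ l, M (i, l) j := by
  simp only [mul_apply, kronA, of_apply, Fintype.sum_prod_type, ite_mul, one_mul, zero_mul]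
  rw [Finset.sum_comm]
  simp

theorem mul_kronA_apply {m : Type*} (M : Matrix m (Fin p) ℝ) (i : m) (j : Fin p × Fin 2) :
    (M * kronA p) i j = M i j.1 := by
  simp [mul_apply, kronA]

theorem kronA_mul_transpose : kronA p * (kronA p)ᵀ = (2 : ℝ) • 1 := by
  ext i j
  rw [kronA_mul_apply]
  by_cases h : i = j <;> simp [kronA, one_apply, h, eq_comm]

theorem kronA_mul_onePi_piHat (θ : Fin p → ℝ) :
    kronA p * onePi (piHat θ) = onePi θ * kronA p := by
  ext i ⟨j, l⟩
  rw [kronA_mul_apply, mul_kronA_apply]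
  simp [onePi, piHat, vecMul, dotProduct, kronA]

theorem kronA_mul_Qbar (G : Matrix (Fin p) (Fin p) ℝ) (lam : Fin p → ℝ) :
    kronA p * Qbar G lam = G * kronA p := by
  ext i ⟨j, l⟩
  rw [kronA_mul_apply, mul_kronA_apply]
  by_cases h : i = j <;> fin_cases l <;> simp [Qbar, h]

theorem kronA_mul_Qtil (G : Matrix (Fin p) (Fin p) ℝ) (lam : Fin p → ℝ) :
    kronA p * Qtil G lam = G * kronA p := by
  ext i ⟨j, l⟩
  rw [kronA_mul_apply, mul_kronA_apply]
  by_cases h : i = j <;> fin_cases l <;> simp [Qtil, h]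

end kronA

theorem stmt14_general {p : ℕ} (G : Matrix (Fin p) (Fin p) ℝ) (lam : Fin p → ℝ)
    (θ : Fin p → ℝ)
    (DsG : Matrix (Fin p) (Fin p) ℝ) (hDsG : IsDeviation G θ DsG)
    (DsQb DsQt : Matrix (Fin p × Fin 2) (Fin p × Fin 2) ℝ)
    (hDsQb : IsDeviation (Qbar G lam) (piHat θ) DsQb)
    (hDsQt : IsDeviation (Qtil G lam) (piHat θ) DsQt)
    (DtQb DtQt : ℝ → Matrix (Fin p × Fin 2) (Fin p × Fin 2) ℝ)
    (hDtQb : IsTransientDeviation (Qbar G lam) (piHat θ) DtQb)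
    (hDtQt : IsTransientDeviation (Qtil G lam) (piHat θ) DtQt)
    (DtG : ℝ → Matrix (Fin p) (Fin p) ℝ) (hDtG : IsTransientDeviation G θ DtG) :
    ∀ t : ℝ, 0 ≤ t →
      kronA p * (DsQt * DtQt t) * (kronA p)ᵀ = (2 : ℝ) • (DsG * DtG t) ∧
      kronA p * (DsQb * DtQb t) * (kronA p)ᵀ = (2 : ℝ) • (DsG * DtG t) := by
  intro t _
  have hπ := kronA_mul_onePi_piHat θ
  have hQt := kronA_mul_Qtil G lam
  have hQb := kronA_mul_Qbar G lam
  exact ⟨mul_mul_mul_transpose_of_mul_eq (hDsQt.mul_eq hQt hπ hDsG)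
      (hDtQt.mul_eq hQt hπ hDtG t) kronA_mul_transpose,
    mul_mul_mul_transpose_of_mul_eq (hDsQb.mul_eq hQb hπ hDsG)
      (hDtQb.mul_eq hQb hπ hDtG t) kronA_mul_transpose⟩

theorem stmt14 {p : ℕ} (G : Matrix (Fin p) (Fin p) ℝ) (lam : Fin p → ℝ)
    (hG : IsGenerator G) (hirr : IsIrreducibleGen G) (hslow : IsSlow G lam)
    (θ : Fin p → ℝ) (hθ : IsStationaryDist G θ)
    (DsG : Matrix (Fin p) (Fin p) ℝ) (hDsG : IsDeviation G θ DsG)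
    (DsQb DsQt : Matrix (Fin p × Fin 2) (Fin p × Fin 2) ℝ)
    (hDsQb : IsDeviation (Qbar G lam) (piHat θ) DsQb)
    (hDsQt : IsDeviation (Qtil G lam) (piHat θ) DsQt)
    (DtQb DtQt : ℝ → Matrix (Fin p × Fin 2) (Fin p × Fin 2) ℝ)
    (hDtQb : IsTransientDeviation (Qbar G lam) (piHat θ) DtQb)
    (hDtQt : IsTransientDeviation (Qtil G lam) (piHat θ) DtQt)
    (DtG : ℝ → Matrix (Fin p) (Fin p) ℝ) (hDtG : IsTransientDeviation G θ DtG) :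
    ∀ t : ℝ, 0 ≤ t →
      kronA p * (DsQt * DtQt t) * (kronA p)ᵀ = (2 : ℝ) • (DsG * DtG t) ∧
      kronA p * (DsQb * DtQb t) * (kronA p)ᵀ = (2 : ℝ) • (DsG * DtG t) :=
  stmt14_general G lam θ DsG hDsG DsQb DsQt hDsQb hDsQt DtQb DtQt hDtQb hDtQt DtG hDtG
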